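/- Let E be a finite graph and let R be a subring of ℂ closed under complex conjugation. Suppose αᵢ, βᵢ ∈ E* with r(αᵢ) = r(βᵢ) and λᵢ ∈ R for i = 1, …, n satisfy: Σᵢ αᵢαᵢ* = 1, Σᵢ βᵢβᵢ* = 1, and λᵢλ̄ᵢ = 1 for all i. Then u = Σᵢ λᵢ αᵢβᵢ* is a unitary in L_R(E), i.e. u*u = uu* = 1. -/

import Mathlib

/-
Since `γ*γ = r(γ)` for a path `γ`, everything hinges on the orthogonality `γᵢ*γⱼ = 0` (`i ≠ j`)
for a family with `∑ γᵢγᵢ* = 1`: granting it, the double sums `u*u` and `uu*` collapse to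
`∑ βᵢβᵢ*` and `∑ αᵢαᵢ*`. The product `γᵢ*γⱼ` vanishes unless one of `γᵢ, γⱼ` extends the other.
To rule that out, let `L_R(E)` act on finitely supported functions on boundary paths (infinite
paths and paths ending at a sink), edges prepending themselves and ghost edges removing a first
edge. Then `γγ*` is the projection onto the boundary paths starting with `γ`, so `∑ γᵢγᵢ* = 1`
says that the number of `γᵢ` with which a boundary path starts is `1` in `R`. In characteristic
zero, a boundary path starting with `γⱼ`, and hence with its prefix `γᵢ`, would be counted twice.
-/


open MulOpposite

noncomputable section

/-- A directed graph: vertices, edges, source and range maps. -/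
structure LGraph where
  V : Type
  Ed : Type
  src : Ed → V
  rng : Ed → V

namespace Leavitt

/-- Generators of the Leavitt path algebra: vertices, edges and ghost edges. -/
inductive Gen (G : LGraph) : Type
  | vert : G.V → Gen G
  | edge : G.Ed → Gen G
  | ghost : G.Ed → Gen G

/-- The star operation on generators: fixes vertices, swaps edges and ghost edges. -/
def starGen {G : LGraph} : Gen G → Gen G
  | .vert v => .vert v
  | .edge e => .ghost e
  | .ghost e => .edge e

@[simp] lemma starGen_vert {G : LGraph} (v : G.V) : starGen (.vert v : Gen G) = .vert v := rfl
@[simp] lemma starGen_edge {G : LGraph} (e : G.Ed) : starGen (.edge e : Gen G) = .ghost e := rfl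
@[simp] lemma starGen_ghost {G : LGraph} (e : G.Ed) : starGen (.ghost e : Gen G) = .edge e := rfl

/-- Words in the generators. -/
abbrev Wd (G : LGraph) : Type := FreeMonoid (Gen G)

/-- The star of a word: reverse it and star each letter. -/
def wordStar {G : LGraph} (w : Wd G) : Wd G :=
  FreeMonoid.ofList (((FreeMonoid.toList w).map starGen).reverse)

/-- A vertex is a sink if it emits no edge. -/
def IsSink (G : LGraph) (v : G.V) : Prop := ∀ e : G.Ed, G.src e ≠ v

/-- The free `R`-algebra on the generators, realized as a monoid algebra on words. -/
abbrev MA (R : Type) [CommRing R] (G : LGraph) : Type := MonoidAlgebra R (Wd G)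

/-- The generator `g` as an element of the free algebra. -/
def gn (R : Type) [CommRing R] {G : LGraph} (g : Gen G) : MA R G :=
  MonoidAlgebra.single (FreeMonoid.of g) (1 : R)

/-- The defining relations of the Leavitt path algebra `L_R(E)`. -/
inductive LRel (R : Type) [CommRing R] (G : LGraph) : MA R G → MA R G → Prop
  | vert_vert {v w : G.V} (h : v ≠ w) : LRel R G (gn R (.vert v) * gn R (.vert w)) 0
  | vert_idem (v : G.V) : LRel R G (gn R (.vert v) * gn R (.vert v)) (gn R (.vert v))
  | ghost_edge {e f : G.Ed} (h : e ≠ f) : LRel R G (gn R (.ghost e) * gn R (.edge f)) 0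
  | ghost_edge_self (e : G.Ed) :
      LRel R G (gn R (.ghost e) * gn R (.edge e)) (gn R (.vert (G.rng e)))
  | src_mul_edge (e : G.Ed) :
      LRel R G (gn R (.vert (G.src e)) * gn R (.edge e)) (gn R (.edge e))
  | edge_mul_rng (e : G.Ed) :
      LRel R G (gn R (.edge e) * gn R (.vert (G.rng e))) (gn R (.edge e))
  | ghost_mul_src (e : G.Ed) :
      LRel R G (gn R (.ghost e) * gn R (.vert (G.src e))) (gn R (.ghost e))
  | rng_mul_ghost (e : G.Ed) :
      LRel R G (gn R (.vert (G.rng e)) * gn R (.ghost e)) (gn R (.ghost e))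
  | ck (v : G.V) (h : {e : G.Ed | G.src e = v}.Finite)
      (hne : {e : G.Ed | G.src e = v}.Nonempty) :
      LRel R G (gn R (.vert v)) (∑ e ∈ h.toFinset, gn R (.edge e) * gn R (.ghost e))
  | unit (h : (Set.univ : Set G.V).Finite) :
      LRel R G 1 (∑ v ∈ h.toFinset, gn R (.vert v))

/-- The Leavitt path algebra of the graph `G` with coefficients in `R`. -/
abbrev LPA (R : Type) [CommRing R] (G : LGraph) : Type := RingQuot (LRel R G)

/-- The quotient map onto the Leavitt path algebra. -/
def mk (R : Type) [CommRing R] (G : LGraph) : MA R G →+* LPA R G :=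
  RingQuot.mkRingHom (LRel R G)

variable (R : Type) [CommRing R] (G : LGraph)

/-- Auxiliary monoid homomorphism sending a word to the image in the opposite algebra of
its starred word. -/
def ghostMap : Wd G →* (LPA R G)ᵐᵒᵖ :=
  FreeMonoid.lift fun x => op (mk R G (gn R (starGen x)))

/-- The underlying ring homomorphism of the (conjugate-linear, with respect to `σ`)
involution, from the free algebra to the opposite of the Leavitt path algebra. -/
def starPre (σ : R →+* R) : MA R G →+* (LPA R G)ᵐᵒᵖ :=
  MonoidAlgebra.liftNCRingHom ((algebraMap R (LPA R G)ᵐᵒᵖ).comp σ) (ghostMap R G)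
    (fun x y => Algebra.commute_algebraMap_left (σ x) _)

lemma starPre_single (σ : R →+* R) (w : Wd G) (c : R) :
    starPre R G σ (MonoidAlgebra.single w c)
      = algebraMap R (LPA R G)ᵐᵒᵖ (σ c) * ghostMap R G w := by
  classical
  exact MonoidAlgebra.liftNC_single _ _ _ _

lemma starPre_gn (σ : R →+* R) (a : Gen G) :
    starPre R G σ (gn R a) = op (mk R G (gn R (starGen a))) := by
  rw [gn, starPre_single, map_one, map_one, one_mul]
  rfl

lemma starPre_gn_mul (σ : R →+* R) (a b : Gen G) :
    starPre R G σ (gn R a * gn R b)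
      = op (mk R G (gn R (starGen b) * gn R (starGen a))) := by
  rw [map_mul, starPre_gn, starPre_gn, ← op_mul, ← map_mul]

lemma starPre_rel (σ : R →+* R) :
    ∀ ⦃a b : MA R G⦄, LRel R G a b → starPre R G σ a = starPre R G σ b := by
  have key : ∀ {x y : MA R G}, LRel R G x y → mk R G x = mk R G y :=
    fun h => RingQuot.mkRingHom_rel h
  intro a b h
  cases h with
  | vert_vert h =>
      rw [starPre_gn_mul, map_zero, starGen_vert, starGen_vert,
        key (LRel.vert_vert (Ne.symm h)), map_zero, op_zero]
  | vert_idem v =>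
      rw [starPre_gn_mul, starPre_gn, starGen_vert, key (LRel.vert_idem v)]
  | ghost_edge h =>
      rw [starPre_gn_mul, map_zero, starGen_edge, starGen_ghost,
        key (LRel.ghost_edge (Ne.symm h)), map_zero, op_zero]
  | ghost_edge_self e =>
      rw [starPre_gn_mul, starPre_gn, starGen_edge, starGen_ghost, starGen_vert,
        key (LRel.ghost_edge_self e)]
  | src_mul_edge e =>
      rw [starPre_gn_mul, starPre_gn, starGen_edge, starGen_vert,
        key (LRel.ghost_mul_src e)]
  | edge_mul_rng e =>
      rw [starPre_gn_mul, starPre_gn, starGen_edge, starGen_vert,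
        key (LRel.rng_mul_ghost e)]
  | ghost_mul_src e =>
      rw [starPre_gn_mul, starPre_gn, starGen_ghost, starGen_vert,
        key (LRel.src_mul_edge e)]
  | rng_mul_ghost e =>
      rw [starPre_gn_mul, starPre_gn, starGen_ghost, starGen_vert,
        key (LRel.edge_mul_rng e)]
  | ck v hfin hne =>
      rw [starPre_gn, starGen_vert, map_sum]
      simp only [starPre_gn_mul, starGen_edge, starGen_ghost]
      rw [← Finset.op_sum, ← map_sum, key (LRel.ck v hfin hne)]
  | unit hfin =>
      rw [map_one, map_sum]
      simp only [starPre_gn, starGen_vert]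
      rw [← Finset.op_sum, ← map_sum, ← key (LRel.unit hfin), map_one, op_one]

/-- The involution `x ↦ x*` on the Leavitt path algebra, conjugate-linear with respect
to the coefficient conjugation `σ`. -/
def lstar (σ : R →+* R) : LPA R G → LPA R G :=
  fun x => unop ((RingQuot.lift ⟨starPre R G σ, starPre_rel R G σ⟩) x)

/-- `chainOK G v l` : the list of edges `l` is a path starting at the vertex `v`. -/
def chainOK (G : LGraph) : G.V → List G.Ed → Prop
  | _, [] => True
  | v, e :: l => G.src e = v ∧ chainOK G (G.rng e) l

/-- The end vertex of a list of edges starting at `v`. -/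
def pathEnd (G : LGraph) : G.V → List G.Ed → G.V
  | v, [] => v
  | _, e :: l => pathEnd G (G.rng e) l

/-- A finite path in `G`: a starting vertex together with a compatible (possibly empty)
list of edges.  Vertices are the paths of length `0`. -/
structure GPath (G : LGraph) where
  first : G.V
  edges : List G.Ed
  ok : chainOK G first edges

/-- The range (end vertex) of a path. -/
def GPath.last {G : LGraph} (p : GPath G) : G.V := pathEnd G p.first p.edges

/-- The length of a path. -/
def GPath.length {G : LGraph} (p : GPath G) : ℕ := p.edges.length

/-- The word in the generators associated to a path. -/
def GPath.word {G : LGraph} (p : GPath G) : Wd G :=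
  FreeMonoid.ofList (Gen.vert p.first :: p.edges.map Gen.edge)

/-- The element `α` of `L_R(E)` associated to a path `α`. -/
def pathElem {G : LGraph} (p : GPath G) : LPA R G :=
  mk R G (MonoidAlgebra.single p.word (1 : R))

/-- The element `α*` of `L_R(E)` associated to a path `α`. -/
def pathElemStar {G : LGraph} (p : GPath G) : LPA R G :=
  mk R G (MonoidAlgebra.single (wordStar p.word) (1 : R))

/-- The diagonal subalgebra: the `R`-linear span of the `αα*` for finite paths `α`. -/
def diagonal : Submodule R (LPA R G) :=
  Submodule.span R (Set.range fun p : GPath G => pathElem R p * pathElemStar R p)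

/-- The image of a vertex in the Leavitt path algebra. -/
def vertexElem (v : G.V) : LPA R G := mk R G (gn R (.vert v))

/-- The image of an edge in the Leavitt path algebra. -/
def edgeElem (e : G.Ed) : LPA R G := mk R G (gn R (.edge e))

/-- The image of a ghost edge (`e*`) in the Leavitt path algebra. -/
def ghostElem (e : G.Ed) : LPA R G := mk R G (gn R (.ghost e))

/-- A projection: a self-adjoint idempotent. -/
def IsProjection (σ : R →+* R) (p : LPA R G) : Prop :=
  p * p = p ∧ lstar R G σ p = p

/-- A unitary element. -/
def IsUnitary (σ : R →+* R) (u : LPA R G) : Prop :=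
  lstar R G σ u * u = 1 ∧ u * lstar R G σ u = 1

/-- The adjacency matrix of a graph. -/
noncomputable def adjMatrix (G : LGraph) : Matrix G.V G.V ℤ :=
  Matrix.of fun v w => (Nat.card {e : G.Ed // G.src e = v ∧ G.rng e = w} : ℤ)

/-- A graph is strongly connected if there is a path between any two vertices. -/
def StronglyConnected (G : LGraph) : Prop :=
  ∀ u w : G.V, ∃ p : GPath G, p.first = u ∧ p.last = w

/-- A graph is essential if it has no sinks and no sources. -/
def Essential (G : LGraph) : Prop :=
  (∀ v : G.V, ∃ e : G.Ed, G.src e = v) ∧ (∀ v : G.V, ∃ e : G.Ed, G.rng e = v)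

/-- Condition (L): every cycle has an exit. -/
def ConditionL (G : LGraph) : Prop :=
  ∀ p : GPath G, p.edges ≠ [] → p.last = p.first →
    ∃ (i : Fin p.edges.length) (f : G.Ed),
      G.src f = G.src (p.edges.get i) ∧ f ≠ p.edges.get i

/-- Complex conjugation on a subring of `ℂ` closed under conjugation. -/
def conjHom (R : Subring ℂ) (hR : ∀ z ∈ R, (starRingEnd ℂ) z ∈ R) : ↥R →+* ↥R where
  toFun z := ⟨(starRingEnd ℂ) (z : ℂ), hR (z : ℂ) z.2⟩
  map_one' := by ext; simp
  map_mul' x y := by ext; simp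
  map_zero' := by ext; simp
  map_add' x y := by ext; simp

/-- A subring of `ℂ` has an essentially unique partition of the unit if whenever
`∑ λᵢ λ̄ᵢ = 1` with all `λᵢ` in the subring, all but one of the `λᵢ` vanish. -/
def HasEUP (R : Subring ℂ) : Prop :=
  ∀ (n : ℕ) (lam : Fin n → ↥R),
    (∑ i, (lam i : ℂ) * (starRingEnd ℂ) (lam i : ℂ)) = 1 →
      ∃ j : Fin n, ∀ i : Fin n, i ≠ j → lam i = 0

/-- The graph `E₂`: one vertex and two loops (`false` ↦ `a`, `true` ↦ `b`). -/
def E2 : LGraph := ⟨PUnit, Bool, fun _ => PUnit.unit, fun _ => PUnit.unit⟩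

/-- The graph `E₂₋`, the Cuntz splice of `E₂`.  Vertices: `0 = u`, `1 = v₁`, `2 = v₂`.
Edges: `0,1 = f₁,f₂` (loops at `u`), `2 = d₁ : u → v₁`, `3 = d₂ : v₁ → u`,
`4 = e₁` (loop at `v₁`), `5 = e₂ : v₁ → v₂`, `6 = e₃ : v₂ → v₁`, `7 = e₄` (loop at `v₂`). -/
def E2m : LGraph := ⟨Fin 3, Fin 8, ![0, 0, 0, 1, 1, 1, 2, 2], ![0, 0, 1, 0, 1, 2, 1, 2]⟩

end Leavitt

end

noncomputable section

namespace Leavitt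

open MonoidAlgebra MulOpposite
open scoped Classical

variable {R : Type} [CommRing R] {G : LGraph}

theorem mk_eq_of_rel {a b : MA R G} (h : LRel R G a b) : mk R G a = mk R G b :=
  RingQuot.mkRingHom_rel h

theorem vertexElem_mul_vertexElem_of_ne {v w : G.V} (h : v ≠ w) :
    vertexElem R G v * vertexElem R G w = 0 := by
  simpa [vertexElem] using mk_eq_of_rel (LRel.vert_vert (R := R) h)

theorem vertexElem_mul_self (v : G.V) : vertexElem R G v * vertexElem R G v = vertexElem R G v := by
  simpa [vertexElem] using mk_eq_of_rel (LRel.vert_idem (R := R) v)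

theorem ghostElem_mul_edgeElem_of_ne {e f : G.Ed} (h : e ≠ f) :
    ghostElem R G e * edgeElem R G f = 0 := by
  simpa [ghostElem, edgeElem] using mk_eq_of_rel (LRel.ghost_edge (R := R) h)

theorem ghostElem_mul_edgeElem_self (e : G.Ed) :
    ghostElem R G e * edgeElem R G e = vertexElem R G (G.rng e) := by
  simpa [ghostElem, edgeElem, vertexElem] using mk_eq_of_rel (LRel.ghost_edge_self (R := R) e)

theorem vertexElem_src_mul_edgeElem (e : G.Ed) :
    vertexElem R G (G.src e) * edgeElem R G e = edgeElem R G e := by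
  simpa [edgeElem, vertexElem] using mk_eq_of_rel (LRel.src_mul_edge (R := R) e)

theorem edgeElem_mul_vertexElem_rng (e : G.Ed) :
    edgeElem R G e * vertexElem R G (G.rng e) = edgeElem R G e := by
  simpa [edgeElem, vertexElem] using mk_eq_of_rel (LRel.edge_mul_rng (R := R) e)

theorem ghostElem_mul_vertexElem_src (e : G.Ed) :
    ghostElem R G e * vertexElem R G (G.src e) = ghostElem R G e := by
  simpa [ghostElem, vertexElem] using mk_eq_of_rel (LRel.ghost_mul_src (R := R) e)

theorem ghostElem_mul_vertexElem_src_mul_edgeElem (e f : G.Ed) :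
    ghostElem R G e * vertexElem R G (G.src e) * edgeElem R G f
      = if e = f then vertexElem R G (G.rng e) else 0 := by
  rw [ghostElem_mul_vertexElem_src]
  split_ifs with hef
  · rw [hef, ghostElem_mul_edgeElem_self]
  · exact ghostElem_mul_edgeElem_of_ne hef

theorem mk_single_one_mul (w w' : Wd G) :
    mk R G (single (w * w') 1) = mk R G (single w 1) * mk R G (single w' 1) := by
  rw [← map_mul, single_mul_single, one_mul]

theorem mk_single_ofList (L : List (Gen G)) :
    mk R G (single (FreeMonoid.ofList L) 1) = (L.map fun g => mk R G (gn R g)).prod := by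
  induction L with
  | nil => rw [FreeMonoid.ofList_nil, ← one_def, map_one, List.map_nil, List.prod_nil]
  | cons a L ih =>
    rw [FreeMonoid.ofList_cons, mk_single_one_mul, ih]
    rfl

variable (R) in
def edgesElem (l : List G.Ed) : LPA R G := (l.map (edgeElem R G)).prod

variable (R) in
def ghostsElem (l : List G.Ed) : LPA R G := (l.reverse.map (ghostElem R G)).prod

@[simp] theorem edgesElem_nil : edgesElem R ([] : List G.Ed) = 1 := rfl

@[simp] theorem ghostsElem_nil : ghostsElem R ([] : List G.Ed) = 1 := rfl

theorem edgesElem_cons (e : G.Ed) (l : List G.Ed) :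
    edgesElem R (e :: l) = edgeElem R G e * edgesElem R l := by
  simp [edgesElem]

theorem ghostsElem_cons (e : G.Ed) (l : List G.Ed) :
    ghostsElem R (e :: l) = ghostsElem R l * ghostElem R G e := by
  simp [ghostsElem]

theorem pathElem_eq (p : GPath G) :
    pathElem R p = vertexElem R G p.first * edgesElem R p.edges := by
  rw [pathElem, GPath.word, mk_single_ofList, List.map_cons, List.prod_cons, List.map_map]
  rfl

theorem pathElemStar_eq (p : GPath G) :
    pathElemStar R p = ghostsElem R p.edges * vertexElem R G p.first := by
  rw [pathElemStar, wordStar, GPath.word, FreeMonoid.toList_ofList, mk_single_ofList]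
  simp only [List.map_cons, List.map_map, List.reverse_cons, List.map_append, List.map_reverse,
    List.prod_append, List.map_nil, List.prod_cons, List.prod_nil, mul_one]
  rw [ghostsElem, List.map_reverse]
  rfl

theorem edgesElem_mul_vertexElem_pathEnd {l : List G.Ed} {v : G.V} (h : chainOK G v l) :
    edgesElem R l * vertexElem R G (pathEnd G v l) = vertexElem R G v * edgesElem R l := by
  induction l generalizing v with
  | nil => simp [pathEnd]
  | cons e t ih =>
    obtain ⟨rfl, ht⟩ := h
    rw [edgesElem_cons, pathEnd, mul_assoc, ih ht, ← mul_assoc, edgeElem_mul_vertexElem_rng,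
      ← mul_assoc, vertexElem_src_mul_edgeElem]

theorem pathElem_mul_vertexElem_last (p : GPath G) :
    pathElem R p * vertexElem R G p.last = pathElem R p := by
  rw [pathElem_eq, mul_assoc, GPath.last, edgesElem_mul_vertexElem_pathEnd p.ok, ← mul_assoc,
    vertexElem_mul_self]

theorem ghostsElem_mul_vertexElem_mul_edgesElem_self {l : List G.Ed} {v : G.V}
    (h : chainOK G v l) :
    ghostsElem R l * vertexElem R G v * edgesElem R l = vertexElem R G (pathEnd G v l) := by
  induction l generalizing v with
  | nil => simp [pathEnd]
  | cons e t ih =>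
    obtain ⟨rfl, ht⟩ := h
    rw [ghostsElem_cons, edgesElem_cons, pathEnd, ← ih ht]
    simp only [← mul_assoc]
    rw [mul_assoc _ (ghostElem R G e), mul_assoc _ _ (edgeElem R G e),
      ghostElem_mul_vertexElem_src_mul_edgeElem, if_pos rfl]

theorem ghostsElem_mul_vertexElem_mul_edgesElem_of_not_prefix {l₁ l₂ : List G.Ed} {v : G.V}
    (h₁ : chainOK G v l₁) (h₂ : chainOK G v l₂) (h₁₂ : ¬ l₁ <+: l₂) (h₂₁ : ¬ l₂ <+: l₁) :
    ghostsElem R l₁ * vertexElem R G v * edgesElem R l₂ = 0 := by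
  induction l₁ generalizing l₂ v with
  | nil => exact absurd List.nil_prefix h₁₂
  | cons e t ih =>
    cases l₂ with
    | nil => exact absurd List.nil_prefix h₂₁
    | cons f t₂ =>
      obtain ⟨rfl, ht⟩ := h₁
      obtain ⟨-, ht₂⟩ := h₂
      rw [ghostsElem_cons, edgesElem_cons]
      simp only [← mul_assoc]
      rw [mul_assoc _ (ghostElem R G e), mul_assoc _ _ (edgeElem R G f),
        ghostElem_mul_vertexElem_src_mul_edgeElem]
      split_ifs with hef
      · subst hef
        exact ih ht ht₂ (fun h => h₁₂ (List.cons_prefix_cons.2 ⟨rfl, h⟩))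
          (fun h => h₂₁ (List.cons_prefix_cons.2 ⟨rfl, h⟩))
      · rw [mul_zero, zero_mul]

def GPath.IsPrefix (p q : GPath G) : Prop := p.first = q.first ∧ p.edges <+: q.edges

theorem pathElemStar_mul_pathElem (p q : GPath G) :
    pathElemStar R p * pathElem R q
      = ghostsElem R p.edges * (vertexElem R G p.first * vertexElem R G q.first)
        * edgesElem R q.edges := by
  rw [pathElemStar_eq, pathElem_eq]
  simp only [mul_assoc]

theorem pathElemStar_mul_pathElem_self (p : GPath G) :
    pathElemStar R p * pathElem R p = vertexElem R G p.last := by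
  rw [pathElemStar_mul_pathElem, vertexElem_mul_self,
    ghostsElem_mul_vertexElem_mul_edgesElem_self p.ok, GPath.last]

theorem pathElemStar_mul_pathElem_of_not_isPrefix {p q : GPath G} (hpq : ¬ p.IsPrefix q)
    (hqp : ¬ q.IsPrefix p) : pathElemStar R p * pathElem R q = 0 := by
  rw [pathElemStar_mul_pathElem]
  by_cases hv : p.first = q.first
  · rw [hv, vertexElem_mul_self]
    exact ghostsElem_mul_vertexElem_mul_edgesElem_of_not_prefix (hv ▸ p.ok) q.ok
      (fun h => hpq ⟨hv, h⟩) (fun h => hqp ⟨hv.symm, h⟩)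
  · rw [vertexElem_mul_vertexElem_of_ne hv, mul_zero, zero_mul]

theorem starGen_starGen (g : Gen G) : starGen (starGen g) = g := by
  cases g <;> rfl

theorem wordStar_of_mul (a : Gen G) (w : Wd G) :
    wordStar (FreeMonoid.of a * w) = wordStar w * FreeMonoid.of (starGen a) := by
  simp [wordStar, FreeMonoid.ofList_append]

theorem wordStar_wordStar (w : Wd G) : wordStar (wordStar w) = w := by
  simp [wordStar, List.map_reverse, Function.comp_def, starGen_starGen]

theorem ghostMap_apply (w : Wd G) :
    ghostMap R G w = op (mk R G (single (wordStar w) 1)) := by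
  induction w using FreeMonoid.inductionOn' with
  | one => rw [map_one, wordStar, FreeMonoid.toList_one]; simp [← one_def]
  | of_mul a w ih =>
    rw [map_mul, ih, wordStar_of_mul, mk_single_one_mul, op_mul]
    rfl

section Involution

variable (σ : R →+* R)

variable (R G) in
def lstarHom : LPA R G →+* (LPA R G)ᵐᵒᵖ :=
  RingQuot.lift ⟨starPre R G σ, starPre_rel R G σ⟩

theorem lstar_def (x : LPA R G) : lstar R G σ x = unop (lstarHom R G σ x) := rfl

theorem lstar_mul (x y : LPA R G) : lstar R G σ (x * y) = lstar R G σ y * lstar R G σ x := by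
  simp only [lstar_def, map_mul, unop_mul]

theorem lstar_sum {ι : Type*} (s : Finset ι) (f : ι → LPA R G) :
    lstar R G σ (∑ i ∈ s, f i) = ∑ i ∈ s, lstar R G σ (f i) := by
  simp only [lstar_def, map_sum, Finset.unop_sum]

theorem lstar_mk (a : MA R G) : lstar R G σ (mk R G a) = unop (starPre R G σ a) :=
  congrArg unop (RingQuot.lift_mkRingHom_apply _ _ a)

theorem lstar_algebraMap (c : R) :
    lstar R G σ (algebraMap R (LPA R G) c) = algebraMap R (LPA R G) (σ c) := by
  have hc : algebraMap R (LPA R G) c = mk R G (single 1 c) := by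
    rw [← (RingQuot.mkAlgHom R (LRel R G)).commutes c, mk, ← RingQuot.mkAlgHom_coe R]
    rfl
  rw [hc, lstar_mk, starPre_single, map_one, mul_one, MulOpposite.algebraMap_apply, unop_op]

theorem lstar_smul (c : R) (x : LPA R G) : lstar R G σ (c • x) = σ c • lstar R G σ x := by
  rw [Algebra.smul_def, lstar_mul, lstar_algebraMap, ← Algebra.commutes, ← Algebra.smul_def]

theorem lstar_mk_single_one (w : Wd G) :
    lstar R G σ (mk R G (single w 1)) = mk R G (single (wordStar w) 1) := by
  rw [lstar_mk, starPre_single, map_one, map_one, one_mul, ghostMap_apply, unop_op]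

theorem lstar_pathElem (p : GPath G) : lstar R G σ (pathElem R p) = pathElemStar R p :=
  lstar_mk_single_one σ p.word

theorem lstar_pathElemStar (p : GPath G) : lstar R G σ (pathElemStar R p) = pathElem R p := by
  rw [pathElemStar, lstar_mk_single_one, wordStar_wordStar, pathElem]

end Involution

section PartialOp

variable {X : Type}

variable (R) in
def partialOp (f : X → Option X) : Module.End R (X →₀ R) :=
  Finsupp.lsum R fun x => (f x).elim 0 Finsupp.lsingle

theorem partialOp_single (f : X → Option X) (x : X) (c : R) :
    partialOp R f (Finsupp.single x c) = (f x).elim 0 fun y => Finsupp.single y c := by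
  rw [partialOp, Finsupp.lsum_single]
  cases f x <;> rfl

theorem partialOp_mul (f g : X → Option X) :
    partialOp R f * partialOp R g = partialOp R fun x => (g x).bind f := by
  refine Finsupp.lhom_ext fun x c => ?_
  rw [Module.End.mul_apply, partialOp_single, partialOp_single]
  cases g x with
  | none => exact map_zero _
  | some y => exact partialOp_single f y c

theorem partialOp_none : partialOp R (fun _ : X => none) = 0 :=
  Finsupp.lhom_ext fun x c => by rw [partialOp_single]; rfl

theorem partialOp_some : partialOp R (some : X → Option X) = 1 :=
  Finsupp.lhom_ext fun x c => by rw [partialOp_single]; rfl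

theorem partialOp_ite_single (p : X → Prop) [DecidablePred p] (x : X) (c : R) :
    partialOp R (fun y => if p y then some y else none) (Finsupp.single x c)
      = if p x then Finsupp.single x c else 0 := by
  rw [partialOp_single]
  split_ifs <;> rfl

end PartialOp

/-- A boundary path: an infinite path, or a finite path ending at a sink `vtx n`, after which
`ed` is `none` (the later values of `vtx` and `ed` are irrelevant). -/
@[ext]
structure BoundaryPath (G : LGraph) where
  vtx : ℕ → G.V
  ed : ℕ → Option G.Ed
  src_eq : ∀ n e, ed n = some e → G.src e = vtx n
  rng_eq : ∀ n e, ed n = some e → G.rng e = vtx (n + 1)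
  isSink : ∀ n, ed n = none → IsSink G (vtx n)

namespace BoundaryPath

def shift (x : BoundaryPath G) : BoundaryPath G where
  vtx n := x.vtx (n + 1)
  ed n := x.ed (n + 1)
  src_eq n := x.src_eq (n + 1)
  rng_eq n := x.rng_eq (n + 1)
  isSink n := x.isSink (n + 1)

def cons (e : G.Ed) (x : BoundaryPath G) (h : G.rng e = x.vtx 0) : BoundaryPath G where
  vtx n := Nat.casesOn n (G.src e) x.vtx
  ed n := Nat.casesOn n (some e) x.ed
  src_eq
    | 0, _, hf => by cases hf; rfl
    | n + 1, f, hf => x.src_eq n f hf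
  rng_eq
    | 0, _, hf => by cases hf; exact h
    | n + 1, f, hf => x.rng_eq n f hf
  isSink
    | 0, hn => by cases hn
    | n + 1, hn => x.isSink n hn

@[simp] theorem shift_vtx (x : BoundaryPath G) (n : ℕ) : x.shift.vtx n = x.vtx (n + 1) := rfl

@[simp] theorem cons_vtx_zero (e : G.Ed) (x : BoundaryPath G) (h : G.rng e = x.vtx 0) :
    (x.cons e h).vtx 0 = G.src e := rfl

@[simp] theorem cons_ed_zero (e : G.Ed) (x : BoundaryPath G) (h : G.rng e = x.vtx 0) :
    (x.cons e h).ed 0 = some e := rfl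

@[simp] theorem shift_cons (e : G.Ed) (x : BoundaryPath G) (h : G.rng e = x.vtx 0) :
    (x.cons e h).shift = x :=
  BoundaryPath.ext rfl rfl

theorem cons_shift {x : BoundaryPath G} {e : G.Ed} (he : x.ed 0 = some e) :
    x.shift.cons e (x.rng_eq 0 e he) = x := by
  refine BoundaryPath.ext (funext fun n => ?_) (funext fun n => ?_) <;> cases n
  · exact x.src_eq 0 e he
  · rfl
  · exact he.symm
  · rfl

theorem exists_vtx_zero_eq (v : G.V) : ∃ x : BoundaryPath G, x.vtx 0 = v := by
  -- follow a chosen outgoing edge at every vertex, until (if ever) a sink is reached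
  let next (w : G.V) : Option G.Ed := if h : ∃ e, G.src e = w then some h.choose else none
  let vtx (n : ℕ) : G.V := Nat.rec v (fun _ w => ((next w).map G.rng).getD w) n
  have next_spec {w : G.V} {e : G.Ed} (h : next w = some e) : G.src e = w := by
    simp only [next] at h
    split_ifs at h with hw
    exact Option.some_injective _ h ▸ hw.choose_spec
  refine ⟨⟨vtx, fun n => next (vtx n), fun n e h => next_spec h, fun n e h => ?_,
    fun n h e he => ?_⟩, rfl⟩
  · change G.rng e = ((next (vtx n)).map G.rng).getD (vtx n)
    rw [h]
    rfl
  · have hsome : next (vtx n) = some _ := dif_pos ⟨e, he⟩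
    exact Option.some_ne_none _ (hsome.symm.trans h)

def EdgesStartWith : List G.Ed → BoundaryPath G → Prop
  | [], _ => True
  | e :: l, x => x.ed 0 = some e ∧ EdgesStartWith l x.shift

def StartsWith (x : BoundaryPath G) (p : GPath G) : Prop :=
  x.vtx 0 = p.first ∧ EdgesStartWith p.edges x

theorem exists_edgesStartWith {l : List G.Ed} {v : G.V} (h : chainOK G v l) :
    ∃ x : BoundaryPath G, x.vtx 0 = v ∧ EdgesStartWith l x := by
  induction l generalizing v with
  | nil => exact (exists_vtx_zero_eq v).imp fun x hx => ⟨hx, trivial⟩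
  | cons e t ih =>
    obtain ⟨rfl, ht⟩ := h
    obtain ⟨x, hx, hxt⟩ := ih ht
    exact ⟨x.cons e hx.symm, rfl, rfl, by rwa [shift_cons]⟩

theorem exists_startsWith (p : GPath G) : ∃ x : BoundaryPath G, x.StartsWith p :=
  exists_edgesStartWith p.ok

theorem EdgesStartWith.of_prefix {l₁ l₂ : List G.Ed} (h : l₁ <+: l₂) {x : BoundaryPath G}
    (hx : EdgesStartWith l₂ x) : EdgesStartWith l₁ x := by
  induction l₁ generalizing l₂ x with
  | nil => trivial
  | cons e t ih =>
    obtain ⟨t₂, rfl⟩ := h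
    exact ⟨hx.1, ih (List.prefix_append t t₂) hx.2⟩

theorem StartsWith.of_isPrefix {p q : GPath G} (h : p.IsPrefix q) {x : BoundaryPath G}
    (hx : x.StartsWith q) : x.StartsWith p :=
  ⟨hx.1.trans h.1.symm, EdgesStartWith.of_prefix h.2 hx.2⟩

def act : Gen G → BoundaryPath G → Option (BoundaryPath G)
  | .vert v, x => if x.vtx 0 = v then some x else none
  | .edge e, x => if h : G.rng e = x.vtx 0 then some (x.cons e h) else none
  | .ghost e, x => if x.ed 0 = some e then some x.shift else none

theorem act_vert (v : G.V) : act (.vert v) = fun x => if x.vtx 0 = v then some x else none := rfl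

end BoundaryPath

open BoundaryPath

variable (R G) in
def repFree : MA R G →ₐ[R] Module.End R (BoundaryPath G →₀ R) :=
  MonoidAlgebra.lift R _ (Wd G) (FreeMonoid.lift fun g => partialOp R (act g))

theorem repFree_gn (g : Gen G) : repFree R G (gn R g) = partialOp R (act g) := by
  rw [gn, repFree, MonoidAlgebra.lift_single, one_smul]
  exact FreeMonoid.lift_eval_of _ _

theorem repFree_gn_mul (a b : Gen G) :
    repFree R G (gn R a * gn R b) = partialOp R fun x => (act b x).bind (act a) := by
  rw [map_mul, repFree_gn, repFree_gn, partialOp_mul]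

theorem act_ghost_bind_act_edge (e : G.Ed) (x : BoundaryPath G) :
    (act (.ghost e) x).bind (act (.edge e)) = if x.ed 0 = some e then some x else none := by
  by_cases he : x.ed 0 = some e
  · have hrng : G.rng e = x.shift.vtx 0 := x.rng_eq 0 e he
    simp [act, he, hrng, cons_shift he]
  · simp [act, he]

theorem repFree_ck (v : G.V) (hfin : {e : G.Ed | G.src e = v}.Finite)
    (hne : {e : G.Ed | G.src e = v}.Nonempty) :
    repFree R G (gn R (.vert v))
      = repFree R G (∑ e ∈ hfin.toFinset, gn R (.edge e) * gn R (.ghost e)) := by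
  refine Finsupp.lhom_ext fun x c => ?_
  simp only [map_sum, repFree_gn, repFree_gn_mul, act_vert, act_ghost_bind_act_edge,
    LinearMap.sum_apply, partialOp_ite_single]
  cases hx : x.ed 0 with
  | none =>
    obtain ⟨e, he⟩ := hne
    rw [if_neg fun hv => x.isSink 0 hx e (he.trans hv.symm)]
    simp
  | some e₀ =>
    simp only [Option.some.injEq, Finset.sum_ite_eq, Set.Finite.mem_toFinset, Set.mem_ofPred_eq,
      x.src_eq 0 e₀ hx]

theorem repFree_unit (hfin : (Set.univ : Set G.V).Finite) :
    repFree R G 1 = repFree R G (∑ v ∈ hfin.toFinset, gn R (.vert v)) := by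
  refine Finsupp.lhom_ext fun x c => ?_
  simp [repFree_gn, act_vert, partialOp_ite_single]

theorem repFree_gn_mul_of_bind_eq {a b : Gen G} {f : BoundaryPath G → Option (BoundaryPath G)}
    (h : ∀ x, (act b x).bind (act a) = f x) : repFree R G (gn R a * gn R b) = partialOp R f := by
  rw [repFree_gn_mul, funext h]

theorem repFree_rel ⦃a b : MA R G⦄ (h : LRel R G a b) : repFree R G a = repFree R G b := by
  cases h with
  | ck v hfin hne => exact repFree_ck v hfin hne
  | unit hfin => exact repFree_unit hfin
  | @vert_vert v w h =>
    rw [map_zero, ← partialOp_none]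
    exact repFree_gn_mul_of_bind_eq fun x => by
      by_cases hx : x.vtx 0 = w <;> simp [act, hx, h.symm]
  | vert_idem v =>
    rw [repFree_gn]
    exact repFree_gn_mul_of_bind_eq fun x => by by_cases hx : x.vtx 0 = v <;> simp [act, hx]
  | @ghost_edge e f h =>
    rw [map_zero, ← partialOp_none]
    exact repFree_gn_mul_of_bind_eq fun x => by
      by_cases hx : G.rng f = x.vtx 0 <;> simp [act, hx, Ne.symm h]
  | ghost_edge_self e =>
    rw [repFree_gn]
    exact repFree_gn_mul_of_bind_eq fun x => by
      by_cases hx : G.rng e = x.vtx 0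
      · simp [act, hx]
      · simp [act, hx, Ne.symm hx]
  | src_mul_edge e =>
    rw [repFree_gn]
    exact repFree_gn_mul_of_bind_eq fun x => by
      by_cases hx : G.rng e = x.vtx 0 <;> simp [act, hx]
  | edge_mul_rng e =>
    rw [repFree_gn]
    exact repFree_gn_mul_of_bind_eq fun x => by
      by_cases hx : G.rng e = x.vtx 0
      · simp [act, hx]
      · simp [act, hx, Ne.symm hx]
  | ghost_mul_src e =>
    rw [repFree_gn]
    exact repFree_gn_mul_of_bind_eq fun x => by
      by_cases hx : x.ed 0 = some e <;> simp [act, hx, x.src_eq 0 e]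
  | rng_mul_ghost e =>
    rw [repFree_gn]
    exact repFree_gn_mul_of_bind_eq fun x => by
      by_cases hx : x.ed 0 = some e <;> simp [act, hx, x.rng_eq 0 e]

variable (R G) in
def rep : LPA R G →ₐ[R] Module.End R (BoundaryPath G →₀ R) :=
  RingQuot.liftAlgHom R ⟨repFree R G, repFree_rel⟩

theorem rep_mk (a : MA R G) : rep R G (mk R G a) = repFree R G a := by
  rw [mk, ← RingQuot.mkAlgHom_coe R, rep]
  exact RingQuot.liftAlgHom_mkAlgHom_apply _ _ _ _

theorem rep_edgesElem_mul_ghostsElem (l : List G.Ed) :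
    rep R G (edgesElem R l * ghostsElem R l)
      = partialOp R fun x => if EdgesStartWith l x then some x else none := by
  induction l with
  | nil => simp [EdgesStartWith, partialOp_some]
  | cons e t ih =>
    rw [edgesElem_cons, ghostsElem_cons, ← mul_assoc, mul_assoc _ (edgesElem R t), map_mul,
      map_mul, ih, edgeElem, ghostElem, rep_mk, rep_mk, repFree_gn, repFree_gn, partialOp_mul,
      partialOp_mul]
    congr 1
    funext x
    by_cases he : x.ed 0 = some e
    · have hrng : G.rng e = x.shift.vtx 0 := x.rng_eq 0 e he
      by_cases ht : EdgesStartWith t x.shift <;>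
        simp [act, EdgesStartWith, he, ht, hrng, cons_shift he]
    · simp [act, EdgesStartWith, he]

theorem rep_pathElem_mul_pathElemStar (p : GPath G) :
    rep R G (pathElem R p * pathElemStar R p)
      = partialOp R fun x => if x.StartsWith p then some x else none := by
  rw [pathElem_eq, pathElemStar_eq, mul_assoc, ← mul_assoc (edgesElem R _), ← mul_assoc, map_mul,
    map_mul, rep_edgesElem_mul_ghostsElem, vertexElem, rep_mk, repFree_gn, partialOp_mul,
    partialOp_mul]
  congr 1
  funext x
  by_cases hv : x.vtx 0 = p.first <;> by_cases hp : EdgesStartWith p.edges x <;>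
    simp [act, StartsWith, hv, hp]

theorem card_startsWith_eq_one [CharZero R] {ι : Type*} [Fintype ι] (γ : ι → GPath G)
    (hγ : ∑ i, pathElem R (γ i) * pathElemStar R (γ i) = 1) (x : BoundaryPath G) :
    (Finset.univ.filter fun i => x.StartsWith (γ i)).card = 1 := by
  have h := congrArg (fun f : Module.End R (BoundaryPath G →₀ R) => f (Finsupp.single x 1) x)
    (congrArg (rep R G) hγ)
  simp only [map_sum, map_one, rep_pathElem_mul_pathElemStar, LinearMap.sum_apply,
    partialOp_ite_single, Finsupp.finsetSum_apply, Module.End.one_apply] at h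
  simpa [apply_ite (fun f : BoundaryPath G →₀ R => f x), Finset.sum_boole] using h

theorem not_isPrefix_of_sum_eq_one [CharZero R] {ι : Type*} [Fintype ι] (γ : ι → GPath G)
    (hγ : ∑ i, pathElem R (γ i) * pathElemStar R (γ i) = 1) {i j : ι} (hij : i ≠ j) :
    ¬ (γ i).IsPrefix (γ j) := by
  intro hle
  obtain ⟨x, hx⟩ := exists_startsWith (γ j)
  exact hij (Finset.card_le_one.1 (card_startsWith_eq_one γ hγ x).le i
    (by simpa using hx.of_isPrefix hle) j (by simpa using hx))

theorem pathElemStar_mul_pathElem_of_sum_eq_one [CharZero R] {ι : Type*} [Fintype ι]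
    (γ : ι → GPath G) (hγ : ∑ i, pathElem R (γ i) * pathElemStar R (γ i) = 1) (i j : ι) :
    pathElemStar R (γ i) * pathElem R (γ j) = if i = j then vertexElem R G (γ i).last else 0 := by
  split_ifs with hij
  · rw [hij, pathElemStar_mul_pathElem_self]
  · exact pathElemStar_mul_pathElem_of_not_isPrefix (not_isPrefix_of_sum_eq_one γ hγ hij)
      (not_isPrefix_of_sum_eq_one γ hγ (Ne.symm hij))

theorem sum_smul_pathElem_mul_pathElemStar_mul_sum [CharZero R] {ι : Type*} [Fintype ι]
    (α β : ι → GPath G) (c d : ι → R) (hβ : ∑ i, pathElem R (β i) * pathElemStar R (β i) = 1)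
    (hlast : ∀ i, (α i).last = (β i).last) (hcd : ∀ i, c i * d i = 1) :
    (∑ i, c i • (pathElem R (α i) * pathElemStar R (β i)))
        * ∑ j, d j • (pathElem R (β j) * pathElemStar R (α j))
      = ∑ i, pathElem R (α i) * pathElemStar R (α i) := by
  have hterm (i j : ι) :
      c i • (pathElem R (α i) * pathElemStar R (β i))
          * d j • (pathElem R (β j) * pathElemStar R (α j))
        = if i = j then pathElem R (α i) * pathElemStar R (α i) else 0 := by
    rw [smul_mul_smul_comm, mul_assoc, ← mul_assoc (pathElemStar R _),
      pathElemStar_mul_pathElem_of_sum_eq_one β hβ]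
    split_ifs with hij
    · rw [hij, hcd, one_smul, ← hlast, ← mul_assoc, pathElem_mul_vertexElem_last]
    · rw [zero_mul, mul_zero, smul_zero]
  simp only [Finset.sum_mul_sum, hterm, Finset.sum_ite_eq, Finset.mem_univ, if_true]

theorem lstar_sum_smul_pathElem_mul_pathElemStar (σ : R →+* R) {ι : Type*} [Fintype ι]
    (α β : ι → GPath G) (c : ι → R) :
    lstar R G σ (∑ i, c i • (pathElem R (α i) * pathElemStar R (β i)))
      = ∑ i, σ (c i) • (pathElem R (β i) * pathElemStar R (α i)) := by
  simp only [lstar_sum, lstar_smul, lstar_mul, lstar_pathElem, lstar_pathElemStar]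

theorem isUnitary_sum_smul_pathElem_mul_pathElemStar [CharZero R] {ι : Type*} [Fintype ι]
    (σ : R →+* R) (α β : ι → GPath G) (c : ι → R) (hlast : ∀ i, (α i).last = (β i).last)
    (hα : ∑ i, pathElem R (α i) * pathElemStar R (α i) = 1)
    (hβ : ∑ i, pathElem R (β i) * pathElemStar R (β i) = 1) (hc : ∀ i, c i * σ (c i) = 1) :
    IsUnitary R G σ (∑ i, c i • (pathElem R (α i) * pathElemStar R (β i))) := by
  rw [IsUnitary, lstar_sum_smul_pathElem_mul_pathElemStar]
  refine ⟨?_, ?_⟩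
  · rw [sum_smul_pathElem_mul_pathElemStar_mul_sum β α _ _ hα (fun i => (hlast i).symm)
      (fun i => (mul_comm _ _).trans (hc i)), hβ]
  · rw [sum_smul_pathElem_mul_pathElemStar_mul_sum α β _ _ hβ hlast hc, hα]

end Leavitt

end

open Leavitt in
theorem sum_lam_alpha_beta_star_is_unitary_general
    (E : LGraph)
    (R : Subring ℂ) (hR : ∀ z ∈ R, (starRingEnd ℂ) z ∈ R)
    (n : ℕ) (α β : Fin n → GPath E) (lam : Fin n → ↥R)
    (hrange : ∀ i, (α i).last = (β i).last)
    (hα : (∑ i, pathElem ↥R (α i) * pathElemStar ↥R (α i)) = 1)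
    (hβ : (∑ i, pathElem ↥R (β i) * pathElemStar ↥R (β i)) = 1)
    (hlam : ∀ i, (lam i : ℂ) * (starRingEnd ℂ) (lam i : ℂ) = 1) :
    IsUnitary ↥R E (conjHom R hR)
      (∑ i, lam i • (pathElem ↥R (α i) * pathElemStar ↥R (β i))) :=
  isUnitary_sum_smul_pathElem_mul_pathElemStar _ α β lam hrange hα hβ
    fun i => Subtype.ext (hlam i)

open Leavitt in
/-- Sums `∑ λᵢ αᵢβᵢ*` with `∑ αᵢαᵢ* = 1 = ∑ βᵢβᵢ*`, `r(αᵢ) = r(βᵢ)` and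
`λᵢλ̄ᵢ = 1` are unitaries in `L_R(E)`. -/
theorem sum_lam_alpha_beta_star_is_unitary
    (E : LGraph) [Fintype E.V] [Fintype E.Ed]
    (R : Subring ℂ) (hR : ∀ z ∈ R, (starRingEnd ℂ) z ∈ R)
    (n : ℕ) (α β : Fin n → GPath E) (lam : Fin n → ↥R)
    (hrange : ∀ i, (α i).last = (β i).last)
    (hα : (∑ i, pathElem ↥R (α i) * pathElemStar ↥R (α i)) = 1)
    (hβ : (∑ i, pathElem ↥R (β i) * pathElemStar ↥R (β i)) = 1)
    (hlam : ∀ i, (lam i : ℂ) * (starRingEnd ℂ) (lam i : ℂ) = 1) :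
    IsUnitary ↥R E (conjHom R hR)
      (∑ i, lam i • (pathElem ↥R (α i) * pathElemStar ↥R (β i))) :=
  sum_lam_alpha_beta_star_is_unitary_general E R hR n α β lam hrange hα hβ hlam
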